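/- arXiv:2002.07313 — 2 statements merged into one kernel-verified Lean document; each statement's English description precedes it below -/
import Mathlib

section
/- Let c ∈ ℝ be a fixed constant and let p = (log n + log log n + c)/(2n). Then the probability that every vertex of the random digraph D_{n,p} has total degree (in-degree plus out-degree) at least 2 tends to e^{−e^{−c}} as n → ∞. -/
open Classical Filter Topology

noncomputable section

/-- Number of arcs of a digraph on `Fin n`, given by a `Bool`-valued adjacency function. -/
def arcCount (n : ℕ) (D : Fin n → Fin n → Bool) : ℕ :=
  (Finset.univ.filter fun a : Fin n × Fin n => D a.1 a.2 = true).card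

/-- A digraph has no loops. -/
def Loopless (n : ℕ) (D : Fin n → Fin n → Bool) : Prop := ∀ i, D i i = false

/-- The probability that the binomial random digraph `D_{n,p}` (each of the `n(n-1)` possible
arcs present independently with probability `p`) satisfies the event `E`. -/
def probDnp (n : ℕ) (p : ℝ) (E : (Fin n → Fin n → Bool) → Prop) : ℝ :=
  ∑ D : Fin n → Fin n → Bool,
    if Loopless n D ∧ E D then
      p ^ arcCount n D * (1 - p) ^ (n * (n - 1) - arcCount n D)
    else 0

/-- The in-degree of vertex `v`: the number of arcs with head `v`. -/
def inDeg (n : ℕ) (D : Fin n → Fin n → Bool) (v : Fin n) : ℕ :=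
  (Finset.univ.filter fun u : Fin n => D u v = true).card

/-- The out-degree of vertex `v`: the number of arcs with tail `v`. -/
def outDeg (n : ℕ) (D : Fin n → Fin n → Bool) (v : Fin n) : ℕ :=
  (Finset.univ.filter fun u : Fin n => D v u = true).card

/-!
Call a vertex *light* if its total degree is at most one; the event is that there is no light
vertex. A vertex has `2(n-1)` potential arcs, so it is light with probability about
`2np (1-p)^(2n) ≈ e^(-c)/n`, and the number `X` of light vertices has mean about `e^(-c)`.
For a fixed `k`-set `S`, the events "`v` is light", `v ∈ S`, are almost independent: the arcs
joining distinct `v ∈ S` to the outside of `S` are disjoint, and with probability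
`(1-p)^(k²) → 1` there is no arc inside `S`. Hence the binomial moments `E[C(X, k)]` tend to
`e^(-ck)/k!`, and the Bonferroni inequalities, which bound `P(X = 0)` above and below by partial
sums of `∑ (-1)^k E[C(X, k)]`, squeeze `P(X = 0)` to `exp(-e^(-c))`.
-/

def bernoulliWeight (p : ℝ) (b : Bool) : ℝ := if b then p else 1 - p

/-- `P(Bin(m, p) ≤ 1)`. -/
def binomAtMostOne (m : ℕ) (p : ℝ) : ℝ := (1 - p) ^ m + m * p * (1 - p) ^ (m - 1)

lemma binomAtMostOne_succ (m : ℕ) (p : ℝ) :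
    binomAtMostOne (m + 1) p = (1 - p) * binomAtMostOne m p + p * (1 - p) ^ m := by
  cases m <;> simp [binomAtMostOne]; ring

lemma binomAtMostOne_nonneg {p : ℝ} (hp0 : 0 ≤ p) (hp1 : p ≤ 1) (m : ℕ) :
    0 ≤ binomAtMostOne m p := by
  have : 0 ≤ 1 - p := by linarith
  unfold binomAtMostOne
  positivity

lemma prod_bernoulliWeight {β : Type*} (p : ℝ) (s : Finset β) (ω : β → Bool) :
    ∏ a ∈ s, bernoulliWeight p (ω a) =
      p ^ (s.filter (ω · = true)).card * (1 - p) ^ (s.card - (s.filter (ω · = true)).card) := by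
  have hcard := Finset.card_filter_add_card_filter_not (s := s) (p := fun a => ω a = true)
  simp only [bernoulliWeight, Finset.prod_ite, Finset.prod_const]
  congr 2
  omega

namespace BoolCube

variable {α : Type*} [Fintype α] [DecidableEq α] (w : α → Bool → ℝ)

def expect (f : (α → Bool) → ℝ) : ℝ :=
  ∑ ω : α → Bool, (∏ a, w a (ω a)) * f ω

variable {w}

lemma expect_prod_apply (g : α → Bool → ℝ) :
    expect w (fun ω => ∏ a, g a (ω a)) =
      ∏ a, (w a false * g a false + w a true * g a true) := by
  simp only [expect, ← Finset.prod_mul_distrib]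
  rw [← Fintype.prod_sum fun a b => w a b * g a b]
  simp [add_comm]

lemma sum_prod_eq_one {β : Type*} [Fintype β] [DecidableEq β] (v : β → Bool → ℝ)
    (hv : ∀ a, v a false + v a true = 1) : ∑ x : β → Bool, ∏ a, v a (x a) = 1 := by
  rw [← Fintype.prod_sum v]
  simp [add_comm, hv]

lemma expect_mono (hw : ∀ a b, 0 ≤ w a b) {f g : (α → Bool) → ℝ}
    (h : ∀ ω, f ω ≤ g ω) :
    expect w f ≤ expect w g :=
  Finset.sum_le_sum fun ω _ =>
    mul_le_mul_of_nonneg_left (h ω) (Finset.prod_nonneg fun _ _ => hw _ _)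

lemma expect_sum {ι : Type*} (s : Finset ι) (f : ι → (α → Bool) → ℝ) :
    expect w (fun ω => ∑ i ∈ s, f i ω) = ∑ i ∈ s, expect w (f i) := by
  simp only [expect, Finset.mul_sum]
  exact Finset.sum_comm

lemma expect_add (f g : (α → Bool) → ℝ) :
    expect w (fun ω => f ω + g ω) = expect w f + expect w g := by
  simp only [expect, mul_add, Finset.sum_add_distrib]

lemma expect_const_mul (r : ℝ) (f : (α → Bool) → ℝ) :
    expect w (fun ω => r * f ω) = r * expect w f := by
  simp only [expect, Finset.mul_sum]
  exact Finset.sum_congr rfl fun ω _ => by ring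

lemma expect_const (hw : ∀ a, w a false + w a true = 1) (r : ℝ) :
    expect w (fun _ => r) = r := by
  rw [expect, ← Finset.sum_mul, sum_prod_eq_one w hw, one_mul]

section split

variable (s : Set α) [DecidablePred (· ∈ s)]

lemma expect_eq_sum_sum (f : (α → Bool) → ℝ) :
    expect w f = ∑ x : {a // a ∈ s} → Bool, ∑ y : {a // a ∉ s} → Bool,
      (∏ a : {a // a ∈ s}, w a (x a)) * (∏ a : {a // a ∉ s}, w a (y a)) *
        f ((Equiv.piEquivPiSubtypeProd (· ∈ s) fun _ => Bool).symm (x, y)) := by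
  rw [expect, ← (Equiv.piEquivPiSubtypeProd (· ∈ s) fun _ => Bool).symm.sum_comp,
    Fintype.sum_prod_type]
  refine Fintype.sum_congr _ _ fun x => Fintype.sum_congr _ _ fun y => ?_
  congr 1
  rw [← Fintype.prod_subtype_mul_prod_subtype (· ∈ s)]
  congr 1 <;> refine Fintype.prod_congr _ _ fun a => ?_ <;> simp [a.2]

end split

lemma expect_mul_of_dependsOn (hw : ∀ a, w a false + w a true = 1) {s t : Set α}
    {f g : (α → Bool) → ℝ} (hf : DependsOn f s) (hg : DependsOn g t) (hst : Disjoint s t) :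
    expect w (fun ω => f ω * g ω) = expect w f * expect w g := by
  simp only [expect_eq_sum_sum s]
  set e := Equiv.piEquivPiSubtypeProd (· ∈ s) fun _ : α => Bool
  set F : ({a // a ∈ s} → Bool) → ℝ := fun x => f (e.symm (x, fun _ => false))
  set G : ({a // a ∉ s} → Bool) → ℝ := fun y => g (e.symm (fun _ => false, y))
  have hF : ∀ x y, f (e.symm (x, y)) = F x := fun x y => hf fun a ha => by simp [e, ha]
  have hG : ∀ x y, g (e.symm (x, y)) = G y := fun x y =>
    hg fun a ha => by simp [e, Set.disjoint_right.1 hst ha]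
  have key : ∀ (A : ({a // a ∈ s} → Bool) → ℝ) (B : ({a // a ∉ s} → Bool) → ℝ),
      ∑ x, ∑ y, (∏ a : {a // a ∈ s}, w a (x a)) * (∏ a : {a // a ∉ s}, w a (y a)) *
          (A x * B y) = (∑ x, (∏ a : {a // a ∈ s}, w a (x a)) * A x) *
          ∑ y, (∏ a : {a // a ∉ s}, w a (y a)) * B y := by
    intro A B
    rw [Finset.sum_mul_sum]
    exact Fintype.sum_congr _ _ fun x => Fintype.sum_congr _ _ fun y => by ring
  have hF1 := key F 1
  have hG1 := key 1 G
  simp only [Pi.one_apply, mul_one, one_mul] at hF1 hG1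
  simp only [hF, hG, key, hF1, hG1, sum_prod_eq_one _ fun a => hw _, mul_one, one_mul]

lemma expect_prod_of_dependsOn (hw : ∀ a, w a false + w a true = 1) {ι : Type*}
    (S : Finset ι) (F : ι → (α → Bool) → ℝ) (B : ι → Set α)
    (hF : ∀ i ∈ S, DependsOn (F i) (B i)) (hB : (S : Set ι).PairwiseDisjoint B) :
    expect w (fun ω => ∏ i ∈ S, F i ω) = ∏ i ∈ S, expect w (F i) := by
  induction S using Finset.induction_on with
  | empty => simpa using expect_const hw 1
  | insert i S hi ih =>
    have hS : DependsOn (fun ω => ∏ j ∈ S, F j ω) (⋃ j ∈ S, B j) := fun x y hxy =>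
      Finset.prod_congr rfl fun j hj =>
        hF j (Finset.mem_insert_of_mem hj) fun a ha => hxy a (Set.mem_biUnion hj ha)
    have hdisj : Disjoint (B i) (⋃ j ∈ S, B j) :=
      Set.disjoint_iUnion₂_right.2 fun j hj =>
        hB (by simp) (by simp [hj]) fun h => hi (h ▸ hj)
    simp only [Finset.prod_insert hi]
    rw [expect_mul_of_dependsOn hw (hF i (by simp)) hS hdisj,
      ih (fun j hj => hF j (Finset.mem_insert_of_mem hj)) (hB.subset (by simp))]

lemma expect_prod_apply_of_mem (hw : ∀ a, w a false + w a true = 1) (B : Finset α)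
    (g : α → Bool → ℝ) :
    expect w (fun ω => ∏ a ∈ B, g a (ω a)) =
      ∏ a ∈ B, (w a false * g a false + w a true * g a true) := by
  have h := expect_prod_apply (w := w) fun a b => if a ∈ B then g a b else 1
  have hg : ∀ a, (w a false * (if a ∈ B then g a false else 1) +
      w a true * (if a ∈ B then g a true else 1)) =
      if a ∈ B then w a false * g a false + w a true * g a true else 1 := fun a => by
    split_ifs <;> simp [hw]
  simpa only [apply_ite (fun f : Bool → ℝ => f _), Finset.prod_ite_mem_eq, hg] using h

lemma expect_forall_eq_false (hw : ∀ a, w a false + w a true = 1) (B : Finset α) :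
    expect w (fun ω => if ∀ a ∈ B, ω a = false then 1 else 0) = ∏ a ∈ B, w a false := by
  convert expect_prod_apply_of_mem hw B (fun _ b => if b = false then (1 : ℝ) else 0) using 1
  · simp only [Finset.prod_boole]
    congr!
  · simp

lemma expect_apply (hw : ∀ a, w a false + w a true = 1) (a : α) (g : Bool → ℝ) :
    expect w (fun ω => g (ω a)) = w a false * g false + w a true * g true := by
  simpa using expect_prod_apply_of_mem hw {a} fun _ => g

lemma boole_card_filter_insert_le_one {b : α} {B : Finset α} (hb : b ∉ B) (ω : α → Bool) :
    (if ((insert b B).filter (ω · = true)).card ≤ 1 then (1 : ℝ) else 0) =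
      (if ω b = false then 1 else 0) * (if (B.filter (ω · = true)).card ≤ 1 then 1 else 0) +
        (if ω b = true then 1 else 0) * (if ∀ a ∈ B, ω a = false then 1 else 0) := by
  rw [Finset.filter_insert]
  cases ω b
  · simp
  · rw [if_pos rfl, Finset.card_insert_of_notMem (by simp [hb])]
    simp [Finset.card_eq_zero, Finset.filter_eq_empty_iff]

lemma expect_card_filter_le_one (hw : ∀ a, w a false + w a true = 1) {p : ℝ} (B : Finset α)
    (hB : ∀ a ∈ B, w a = bernoulliWeight p) :
    expect w (fun ω => if (B.filter (ω · = true)).card ≤ 1 then 1 else 0) =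
      binomAtMostOne B.card p := by
  induction B using Finset.induction_on with
  | empty => simpa [binomAtMostOne] using expect_const hw 1
  | insert b B hb ih =>
    have hdisj : Disjoint ({b} : Set α) B := by simpa using hb
    have hcoord : ∀ g : Bool → ℝ, DependsOn (fun ω : α → Bool => g (ω b)) {b} :=
      fun g x y h => by simp [h b rfl]
    have hcard : DependsOn
        (fun ω : α → Bool => if (B.filter (ω · = true)).card ≤ 1 then (1 : ℝ) else 0) B :=
      fun x y h => by dsimp only; rw [Finset.filter_congr fun a ha => by rw [h a ha]]
    have hzero :
        DependsOn (fun ω : α → Bool => if ∀ a ∈ B, ω a = false then (1 : ℝ) else 0) B :=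
      fun x y h => by simp +contextual only [Finset.mem_coe] at h; simp +contextual [h]
    simp only [boole_card_filter_insert_le_one hb]
    rw [expect_add,
      expect_mul_of_dependsOn hw (hcoord fun x => if x = false then 1 else 0) hcard hdisj,
      expect_mul_of_dependsOn hw (hcoord fun x => if x = true then 1 else 0) hzero hdisj,
      ih fun a ha => hB a (by simp [ha]),
      expect_apply hw b fun x => if x = false then 1 else 0,
      expect_apply hw b fun x => if x = true then 1 else 0, expect_forall_eq_false hw,
      Finset.prod_congr rfl fun a ha => by rw [hB a (by simp [ha])],
      hB b (by simp), Finset.card_insert_of_notMem hb, binomAtMostOne_succ]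
    simp [bernoulliWeight]

end BoolCube

open BoolCube

/-- Loops are Bernoulli(0) coordinates, which makes `D_{n,p}` a product measure on all of
`Fin n × Fin n`. -/
def arcWeight (n : ℕ) (p : ℝ) (a : Fin n × Fin n) : Bool → ℝ :=
  bernoulliWeight (if a.1 = a.2 then 0 else p)

section arcWeight

variable {n : ℕ} {p : ℝ}

lemma arcWeight_false_add_true (a : Fin n × Fin n) :
    arcWeight n p a false + arcWeight n p a true = 1 := by
  simp [arcWeight, bernoulliWeight]

lemma arcWeight_nonneg (hp0 : 0 ≤ p) (hp1 : p ≤ 1) (a : Fin n × Fin n) (b : Bool) :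
    0 ≤ arcWeight n p a b := by
  unfold arcWeight bernoulliWeight
  split_ifs <;> linarith

lemma arcWeight_of_ne {a : Fin n × Fin n} (h : a.1 ≠ a.2) :
    arcWeight n p a = bernoulliWeight p := by
  simp [arcWeight, h]

lemma prod_arcWeight (D : Fin n → Fin n → Bool) :
    ∏ a, arcWeight n p a (D a.1 a.2) =
      if Loopless n D then p ^ arcCount n D * (1 - p) ^ (n * (n - 1) - arcCount n D) else 0 := by
  split_ifs with hD
  · have hdiag : ∀ a : Fin n × Fin n, arcWeight n p a (D a.1 a.2) =
        if a ∈ Finset.univ.offDiag then bernoulliWeight p (D a.1 a.2) else 1 := by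
      rintro ⟨i, j⟩
      by_cases h : i = j
      · subst h; simp [arcWeight, bernoulliWeight, hD i]
      · simp [arcWeight, h]
    have harcs : (Finset.univ.offDiag.filter fun a : Fin n × Fin n => D a.1 a.2 = true) =
        Finset.univ.filter fun a : Fin n × Fin n => D a.1 a.2 = true := by
      ext ⟨i, j⟩
      simp only [Finset.mem_filter, Finset.mem_offDiag, Finset.mem_univ, true_and,
        and_iff_right_iff_imp]
      rintro h rfl
      simp [hD i] at h
    rw [Fintype.prod_congr _ _ hdiag, Finset.prod_ite_mem_eq, prod_bernoulliWeight, harcs,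
      Finset.offDiag_card, Finset.card_univ, Fintype.card_fin, ← Nat.mul_sub_one]
    rfl
  · obtain ⟨i, hi⟩ : ∃ i, D i i = true := by simpa [Loopless] using hD
    exact Finset.prod_eq_zero (Finset.mem_univ (i, i)) (by simp [arcWeight, bernoulliWeight, hi])

lemma probDnp_eq_expect (E : (Fin n → Fin n → Bool) → Prop)
    (f : (Fin n × Fin n → Bool) → ℝ)
    (hf : ∀ D, Loopless n D → f (fun a => D a.1 a.2) = if E D then 1 else 0) :
    probDnp n p E = expect (arcWeight n p) f := by
  unfold probDnp expect
  apply Fintype.sum_equiv (Equiv.curry (Fin n) (Fin n) Bool).symm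
  intro D
  change _ = (∏ a, arcWeight n p a (D a.1 a.2)) * f (fun a => D a.1 a.2)
  rw [prod_arcWeight]
  by_cases hD : Loopless n D
  · simp [hD, hf D hD]
  · simp [hD]

end arcWeight

section degrees

variable {n : ℕ}

def incidentArcs (v : Fin n) : Finset (Fin n × Fin n) :=
  Finset.univ.filter fun a => a.1 = v ∨ a.2 = v

def totalDeg (ω : Fin n × Fin n → Bool) (v : Fin n) : ℕ :=
  ((incidentArcs v).filter (ω · = true)).card

def lowDegVerts (ω : Fin n × Fin n → Bool) : Finset (Fin n) :=
  Finset.univ.filter fun v => totalDeg ω v ≤ 1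

lemma mem_lowDegVerts {ω : Fin n × Fin n → Bool} {v : Fin n} :
    v ∈ lowDegVerts ω ↔ totalDeg ω v ≤ 1 := by
  simp [lowDegVerts]

lemma inDeg_add_outDeg {D : Fin n → Fin n → Bool} (hD : Loopless n D) (v : Fin n) :
    inDeg n D v + outDeg n D v = totalDeg (fun a => D a.1 a.2) v := by
  have hsplit : (incidentArcs v).filter (fun a => D a.1 a.2 = true) =
      (Finset.univ.filter fun u => D u v = true).image (·, v) ∪
        (Finset.univ.filter fun u => D v u = true).image (v, ·) := by
    ext ⟨x, y⟩
    simp only [incidentArcs, Finset.mem_filter, Finset.mem_univ, true_and, Finset.mem_union,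
      Finset.mem_image, Prod.mk.injEq]
    constructor
    · rintro ⟨rfl | rfl, h⟩
      · exact Or.inr ⟨y, h, rfl, rfl⟩
      · exact Or.inl ⟨x, h, rfl, rfl⟩
    · rintro (⟨u, h, rfl, rfl⟩ | ⟨u, h, rfl, rfl⟩)
      · exact ⟨Or.inr rfl, h⟩
      · exact ⟨Or.inl rfl, h⟩
  have hdisj : Disjoint ((Finset.univ.filter fun u => D u v = true).image (·, v))
      ((Finset.univ.filter fun u => D v u = true).image (v, ·)) := by
    simp only [Finset.disjoint_left, Finset.mem_image, Finset.mem_filter, Finset.mem_univ,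
      true_and]
    rintro _ ⟨u, hu, rfl⟩ ⟨u', -, h⟩
    rw [Prod.mk.injEq] at h
    simp [← h.1, hD v] at hu
  rw [totalDeg, hsplit, Finset.card_union_of_disjoint hdisj,
    Finset.card_image_of_injective _ fun _ _ h => (Prod.ext_iff.1 h).1,
    Finset.card_image_of_injective _ fun _ _ h => (Prod.ext_iff.1 h).2, inDeg, outDeg]

lemma probDnp_minDeg_two_eq (p : ℝ) :
    probDnp n p (fun D => ∀ v : Fin n, 2 ≤ inDeg n D v + outDeg n D v) =
      expect (arcWeight n p) (fun ω => if lowDegVerts ω = ∅ then 1 else 0) := by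
  refine probDnp_eq_expect _ _ fun D hD => ?_
  have h : lowDegVerts (fun a => D a.1 a.2) = ∅ ↔ ∀ v, 2 ≤ inDeg n D v + outDeg n D v := by
    simp [lowDegVerts, Finset.filter_eq_empty_iff, inDeg_add_outDeg hD, Nat.lt_iff_add_one_le]
  simp only [h]
  congr!

end degrees

/-- The decidability instances are implicit so that the lemma applies to goals carrying
classical ones. -/
lemma boole_le_boole {P Q : Prop} {_ : Decidable P} {_ : Decidable Q} (h : P → Q) :
    (if P then 1 else 0 : ℝ) ≤ if Q then 1 else 0 := by
  split_ifs <;> simp_all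

section outerArcs

variable {n : ℕ} {S : Finset (Fin n)} {v : Fin n}

def outerArcs (S : Finset (Fin n)) (v : Fin n) : Finset (Fin n × Fin n) :=
  Sᶜ.image (v, ·) ∪ Sᶜ.image (·, v)

lemma mem_outerArcs {a : Fin n × Fin n} :
    a ∈ outerArcs S v ↔ (a.1 = v ∧ a.2 ∉ S) ∨ (a.2 = v ∧ a.1 ∉ S) := by
  obtain ⟨x, y⟩ := a
  simp only [outerArcs, Finset.mem_union, Finset.mem_image, Finset.mem_compl, Prod.mk.injEq]
  grind

lemma card_outerArcs (hv : v ∈ S) : (outerArcs S v).card = 2 * (n - S.card) := by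
  have hdisj : Disjoint (Sᶜ.image (v, ·)) (Sᶜ.image (·, v)) := by
    simp only [Finset.disjoint_left, Finset.mem_image, Finset.mem_compl]
    rintro _ ⟨u, hu, rfl⟩ ⟨u', -, h⟩
    rw [Prod.mk.injEq] at h
    exact hu (h.2 ▸ hv)
  rw [outerArcs, Finset.card_union_of_disjoint hdisj,
    Finset.card_image_of_injective _ fun _ _ h => (Prod.ext_iff.1 h).2,
    Finset.card_image_of_injective _ fun _ _ h => (Prod.ext_iff.1 h).1, Finset.card_compl,
    Fintype.card_fin, two_mul]

lemma outerArcs_subset_incidentArcs : outerArcs S v ⊆ incidentArcs v := fun a ha => by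
  rw [mem_outerArcs] at ha
  simp only [incidentArcs, Finset.mem_filter, Finset.mem_univ, true_and]
  tauto

lemma ne_of_mem_outerArcs (hv : v ∈ S) {a : Fin n × Fin n} (ha : a ∈ outerArcs S v) :
    a.1 ≠ a.2 := by
  rw [mem_outerArcs] at ha
  rintro h
  rcases ha with ⟨h1, h2⟩ | ⟨h1, h2⟩ <;> simp_all

lemma notMem_product_of_mem_outerArcs {a : Fin n × Fin n} (ha : a ∈ outerArcs S v) :
    a ∉ S ×ˢ S := by
  rw [mem_outerArcs] at ha
  rw [Finset.mem_product]
  tauto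

lemma pairwiseDisjoint_outerArcs (S : Finset (Fin n)) :
    (S : Set (Fin n)).PairwiseDisjoint fun v => (outerArcs S v : Set (Fin n × Fin n)) := by
  intro u hu v hv huv
  simp only [Function.onFun, Finset.disjoint_coe, Finset.disjoint_left, mem_outerArcs]
  grind

lemma incidentArcs_filter_subset (hv : v ∈ S) {ω : Fin n × Fin n → Bool}
    (hω : ∀ a ∈ S ×ˢ S, ω a = false) :
    (incidentArcs v).filter (ω · = true) ⊆ (outerArcs S v).filter (ω · = true) := by
  intro a ha
  simp only [incidentArcs, Finset.mem_filter, Finset.mem_univ, true_and] at ha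
  refine Finset.mem_filter.2 ⟨mem_outerArcs.2 ?_, ha.2⟩
  have : a ∉ S ×ˢ S := fun h => by simp [hω a h] at ha
  rw [Finset.mem_product] at this
  rcases ha.1 with h | h <;> [left; right] <;> exact ⟨h, fun h' => this (by simp_all)⟩

end outerArcs

section subsetProb

variable {n : ℕ} {p : ℝ}

lemma expect_prod_outerArcs (S : Finset (Fin n)) :
    expect (arcWeight n p)
        (fun ω => ∏ v ∈ S,
          if ((outerArcs S v).filter (ω · = true)).card ≤ 1 then 1 else 0) =
      binomAtMostOne (2 * (n - S.card)) p ^ S.card := by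
  rw [expect_prod_of_dependsOn arcWeight_false_add_true S _ (fun v => outerArcs S v)
    (fun v _ x y h => by rw [Finset.filter_congr fun a ha => by rw [h a ha]])
    (pairwiseDisjoint_outerArcs S)]
  rw [Finset.prod_congr rfl fun v hv => by
    rw [expect_card_filter_le_one arcWeight_false_add_true _
      fun a ha => arcWeight_of_ne (ne_of_mem_outerArcs hv ha), card_outerArcs hv]]
  exact Finset.prod_const _

lemma expect_subset_lowDegVerts_le (hp0 : 0 ≤ p) (hp1 : p ≤ 1) (S : Finset (Fin n)) :
    expect (arcWeight n p) (fun ω => if S ⊆ lowDegVerts ω then 1 else 0) ≤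
      binomAtMostOne (2 * (n - S.card)) p ^ S.card := by
  rw [← expect_prod_outerArcs]
  refine expect_mono (arcWeight_nonneg hp0 hp1) fun ω => ?_
  rw [Finset.prod_boole]
  exact boole_le_boole fun hS v hv =>
    (Finset.card_le_card (Finset.filter_subset_filter _ outerArcs_subset_incidentArcs)).trans
      (mem_lowDegVerts.1 (hS hv))

lemma one_sub_pow_le_expect_forall_product_eq_false (hp0 : 0 ≤ p) (hp1 : p ≤ 1)
    (S : Finset (Fin n)) :
    (1 - p) ^ (S.card * S.card) ≤
      expect (arcWeight n p) (fun ω => if ∀ a ∈ S ×ˢ S, ω a = false then 1 else 0) := by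
  rw [expect_forall_eq_false arcWeight_false_add_true, ← Finset.card_product,
    ← Finset.prod_const]
  refine Finset.prod_le_prod (fun _ _ => by linarith) fun a _ => ?_
  simp only [arcWeight, bernoulliWeight, Bool.false_eq_true, if_false]
  split_ifs <;> linarith

lemma le_expect_subset_lowDegVerts (hp0 : 0 ≤ p) (hp1 : p ≤ 1) (S : Finset (Fin n)) :
    (1 - p) ^ (S.card * S.card) * binomAtMostOne (2 * (n - S.card)) p ^ S.card ≤
      expect (arcWeight n p) (fun ω => if S ⊆ lowDegVerts ω then 1 else 0) := by
  have hindep := expect_mul_of_dependsOn (w := arcWeight n p) arcWeight_false_add_true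
    (f := fun ω => if ∀ a ∈ S ×ˢ S, ω a = false then 1 else 0)
    (g := fun ω => ∏ v ∈ S,
      if ((outerArcs S v).filter (ω · = true)).card ≤ 1 then 1 else 0)
    (s := ↑(S ×ˢ S)) (t := (↑(S ×ˢ S))ᶜ)
    (fun x y h => by simp +contextual only [Finset.mem_coe] at h; simp +contextual [h])
    (fun x y h => Finset.prod_congr rfl fun v _ => by
      rw [Finset.filter_congr fun a ha => by
        rw [h a (notMem_product_of_mem_outerArcs ha)]])
    disjoint_compl_right
  rw [expect_prod_outerArcs] at hindep
  calc _ ≤ _ := mul_le_mul_of_nonneg_right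
        (one_sub_pow_le_expect_forall_product_eq_false hp0 hp1 S)
        (pow_nonneg (binomAtMostOne_nonneg hp0 hp1 _) _)
    _ = _ := hindep.symm
    _ ≤ _ := expect_mono (arcWeight_nonneg hp0 hp1) fun ω => by
      rw [Finset.prod_boole, ite_zero_mul_ite_zero, one_mul]
      refine boole_le_boole fun ⟨hin, hout⟩ v hv => ?_
      exact mem_lowDegVerts.2
        ((Finset.card_le_card (incidentArcs_filter_subset hv hin)).trans (hout v hv))

end subsetProb

lemma alternating_sum_range_choose_eq (t m : ℕ) :
    ∑ k ∈ Finset.range (m + 1), (-1 : ℝ) ^ k * t.choose k =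
      if t = 0 then 1 else (-1 : ℝ) ^ m * ((t - 1).choose m : ℝ) := by
  cases t with
  | zero => simp [Finset.sum_range_succ']
  | succ t => exact_mod_cast Int.alternating_sum_range_choose_eq_choose (n := t) (m := m)

lemma boole_eq_zero_le_alternating_sum_choose (t j : ℕ) :
    (if t = 0 then 1 else 0 : ℝ) ≤
      ∑ k ∈ Finset.range (2 * j + 1), (-1 : ℝ) ^ k * t.choose k := by
  rw [alternating_sum_range_choose_eq]
  split_ifs
  · rfl
  · rw [(even_two_mul j).neg_one_pow, one_mul]
    positivity

lemma alternating_sum_choose_le_boole_eq_zero (t j : ℕ) :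
    ∑ k ∈ Finset.range (2 * j + 1 + 1), (-1 : ℝ) ^ k * t.choose k ≤
      if t = 0 then 1 else 0 := by
  rw [alternating_sum_range_choose_eq]
  split_ifs
  · rfl
  · rw [(odd_two_mul_add_one j).neg_one_pow, neg_one_mul, neg_nonpos]
    positivity

lemma tendsto_exp_neg_of_bonferroni {P : ℕ → ℝ} {M : ℕ → ℕ → ℝ} {μ : ℝ}
    (hM : ∀ k, Tendsto (fun n => M n k) atTop (𝓝 (μ ^ k / k.factorial)))
    (hupper : ∀ j, ∀ᶠ n in atTop,
      P n ≤ ∑ k ∈ Finset.range (2 * j + 1), (-1) ^ k * M n k)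
    (hlower : ∀ j, ∀ᶠ n in atTop,
      ∑ k ∈ Finset.range (2 * j + 1 + 1), (-1) ^ k * M n k ≤ P n) :
    Tendsto P atTop (𝓝 (Real.exp (-μ))) := by
  have hseries : Tendsto (fun m => ∑ k ∈ Finset.range m, (-1) ^ k * (μ ^ k / k.factorial))
      atTop (𝓝 (Real.exp (-μ))) := by
    rw [Real.exp_eq_exp_ℝ]
    refine (NormedSpace.expSeries_div_hasSum_exp (-μ)).tendsto_sum_nat.congr fun m =>
      Finset.sum_congr rfl fun k _ => ?_
    rw [neg_pow, mul_div_assoc]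
  have hpartial : ∀ m, Tendsto (fun n => ∑ k ∈ Finset.range m, (-1) ^ k * M n k) atTop
      (𝓝 (∑ k ∈ Finset.range m, (-1) ^ k * (μ ^ k / k.factorial))) := fun m =>
    tendsto_finsetSum _ fun k _ => (hM k).const_mul _
  rw [tendsto_order]
  constructor
  · intro a ha
    have hodd : Tendsto (fun j => 2 * j + 1 + 1) atTop atTop :=
      tendsto_atTop_mono (fun j => by rw [id]; omega) tendsto_id
    obtain ⟨j, hj⟩ := ((hseries.comp hodd).eventually (lt_mem_nhds ha)).exists
    filter_upwards [(hpartial _).eventually (lt_mem_nhds hj), hlower j] with n h1 h2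
    exact h1.trans_le h2
  · intro a ha
    have heven : Tendsto (fun j => 2 * j + 1) atTop atTop :=
      tendsto_atTop_mono (fun j => by rw [id]; omega) tendsto_id
    obtain ⟨j, hj⟩ := ((hseries.comp heven).eventually (gt_mem_nhds ha)).exists
    filter_upwards [(hpartial _).eventually (gt_mem_nhds hj), hupper j] with n h1 h2
    exact h2.trans_lt h1

lemma sum_powersetCard_boole_subset {β : Type*} [Fintype β] [DecidableEq β] (X : Finset β)
    (k : ℕ) :
    ∑ S ∈ Finset.powersetCard k Finset.univ, (if S ⊆ X then 1 else 0 : ℝ) =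
      X.card.choose k := by
  rw [Finset.sum_boole, ← Finset.card_powersetCard]
  congr 2
  ext S
  simp [Finset.mem_powersetCard, and_comm]

section moments

variable {n : ℕ} {p : ℝ}

/-- The `k`-th binomial moment `E[(#lowDegVerts).choose k]`. -/
def lowDegMoment (n : ℕ) (p : ℝ) (k : ℕ) : ℝ :=
  ∑ S ∈ Finset.powersetCard k Finset.univ,
    expect (arcWeight n p) (fun ω => if S ⊆ lowDegVerts ω then 1 else 0)

lemma alternating_sum_lowDegMoment (m : ℕ) :
    ∑ k ∈ Finset.range m, (-1 : ℝ) ^ k * lowDegMoment n p k =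
      expect (arcWeight n p)
        (fun ω => ∑ k ∈ Finset.range m, (-1 : ℝ) ^ k * (lowDegVerts ω).card.choose k) := by
  simp only [← sum_powersetCard_boole_subset, expect_sum, expect_const_mul, lowDegMoment]

lemma expect_lowDegVerts_eq_empty_le (hp0 : 0 ≤ p) (hp1 : p ≤ 1) (j : ℕ) :
    expect (arcWeight n p) (fun ω => if lowDegVerts ω = ∅ then 1 else 0) ≤
      ∑ k ∈ Finset.range (2 * j + 1), (-1 : ℝ) ^ k * lowDegMoment n p k := by
  rw [alternating_sum_lowDegMoment]
  refine expect_mono (arcWeight_nonneg hp0 hp1) fun ω => ?_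
  convert boole_eq_zero_le_alternating_sum_choose (lowDegVerts ω).card j using 2
  simp [Finset.card_eq_zero]

lemma le_expect_lowDegVerts_eq_empty (hp0 : 0 ≤ p) (hp1 : p ≤ 1) (j : ℕ) :
    ∑ k ∈ Finset.range (2 * j + 1 + 1), (-1 : ℝ) ^ k * lowDegMoment n p k ≤
      expect (arcWeight n p) (fun ω => if lowDegVerts ω = ∅ then 1 else 0) := by
  rw [alternating_sum_lowDegMoment]
  refine expect_mono (arcWeight_nonneg hp0 hp1) fun ω => ?_
  convert alternating_sum_choose_le_boole_eq_zero (lowDegVerts ω).card j using 2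
  simp [Finset.card_eq_zero]

lemma lowDegMoment_le (hp0 : 0 ≤ p) (hp1 : p ≤ 1) (k : ℕ) :
    lowDegMoment n p k ≤ n.choose k * binomAtMostOne (2 * (n - k)) p ^ k := by
  calc lowDegMoment n p k
      ≤ ∑ S ∈ Finset.powersetCard k (Finset.univ : Finset (Fin n)),
          binomAtMostOne (2 * (n - k)) p ^ k :=
        Finset.sum_le_sum fun S hS => by
          simpa [(Finset.mem_powersetCard.1 hS).2] using
            expect_subset_lowDegVerts_le hp0 hp1 S
    _ = _ := by simp

lemma le_lowDegMoment (hp0 : 0 ≤ p) (hp1 : p ≤ 1) (k : ℕ) :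
    n.choose k * ((1 - p) ^ (k * k) * binomAtMostOne (2 * (n - k)) p ^ k) ≤
      lowDegMoment n p k := by
  calc _ = ∑ S ∈ Finset.powersetCard k (Finset.univ : Finset (Fin n)),
          (1 - p) ^ (k * k) * binomAtMostOne (2 * (n - k)) p ^ k := by simp
    _ ≤ lowDegMoment n p k :=
        Finset.sum_le_sum fun S hS => by
          simpa [(Finset.mem_powersetCard.1 hS).2] using
            le_expect_subset_lowDegVerts hp0 hp1 S

end moments

section asymptotics

open Real

lemma tendsto_pow_log_div_natCast (k : ℕ) :
    Tendsto (fun n : ℕ => log n ^ k / n) atTop (𝓝 0) := by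
  simpa [Function.comp_def] using
    (tendsto_pow_log_div_mul_add_atTop 1 0 k one_ne_zero).comp tendsto_natCast_atTop_atTop

lemma tendsto_log_natCast : Tendsto (fun n : ℕ => log n) atTop atTop :=
  tendsto_log_atTop.comp tendsto_natCast_atTop_atTop

lemma eventually_one_lt_log_natCast : ∀ᶠ n : ℕ in atTop, 1 < log n :=
  tendsto_log_natCast.eventually_gt_atTop 1

def criticalProb (c : ℝ) (n : ℕ) : ℝ := (log n + log (log n) + c) / (2 * n)

lemma tendsto_log_add_log_log_add_div_log (c : ℝ) :
    Tendsto (fun n : ℕ => (log n + log (log n) + c) / log n) atTop (𝓝 1) := by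
  have hloglog : Tendsto (fun n : ℕ => log (log n) / log n) atTop (𝓝 0) := by
    simpa [Function.comp_def] using
      (tendsto_pow_log_div_mul_add_atTop 1 0 1 one_ne_zero).comp tendsto_log_natCast
  have hc : Tendsto (fun n : ℕ => c / log n) atTop (𝓝 0) :=
    tendsto_const_nhds.div_atTop tendsto_log_natCast
  refine ((tendsto_const_nhds (x := (1 : ℝ))).add (hloglog.add hc)).congr' ?_ |>.trans (by simp)
  filter_upwards [eventually_one_lt_log_natCast] with n hn
  field_simp
  ring

lemma tendsto_criticalProb (c : ℝ) : Tendsto (criticalProb c) atTop (𝓝 0) := by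
  have h := ((tendsto_log_add_log_log_add_div_log c).mul
    (tendsto_pow_log_div_natCast 1)).div_const 2
  rw [one_mul, zero_div] at h
  refine h.congr' ?_
  filter_upwards [eventually_one_lt_log_natCast, eventually_ge_atTop 1] with n hn hn1
  have : (n : ℝ) ≠ 0 := by positivity
  simp only [criticalProb, pow_one]
  field_simp

lemma tendsto_nat_mul_criticalProb_sq (c : ℝ) :
    Tendsto (fun n : ℕ => n * criticalProb c n ^ 2) atTop (𝓝 0) := by
  have h := (((tendsto_log_add_log_log_add_div_log c).pow 2).mul
    (tendsto_pow_log_div_natCast 2)).div_const 4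
  rw [mul_zero, zero_div] at h
  refine h.congr' ?_
  filter_upwards [eventually_one_lt_log_natCast, eventually_ge_atTop 1] with n hn hn1
  have : (n : ℝ) ≠ 0 := by positivity
  have : log n ≠ 0 := by positivity
  simp only [criticalProb]
  field_simp
  ring

lemma eventually_criticalProb_mem_Icc (c : ℝ) :
    ∀ᶠ n : ℕ in atTop, 0 ≤ criticalProb c n ∧ criticalProb c n ≤ 1 / 2 := by
  have hL : Tendsto (fun n : ℕ => log n + log (log n) + c) atTop atTop :=
    tendsto_atTop_add_const_right _ c
      (tendsto_log_natCast.atTop_add_atTop (tendsto_log_atTop.comp tendsto_log_natCast))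
  filter_upwards [hL.eventually_ge_atTop 0,
    (tendsto_criticalProb c).eventually (eventually_le_nhds (by norm_num : (0 : ℝ) < 1 / 2))]
    with n h0 h1
  exact ⟨div_nonneg h0 (by positivity), h1⟩

lemma abs_log_one_sub_add_le {x : ℝ} (hx : |x| ≤ 1 / 2) : |log (1 - x) + x| ≤ 2 * x ^ 2 := by
  have h := abs_log_sub_add_sum_range_le (hx.trans_lt (by norm_num)) 1
  simp only [Finset.sum_range_one, zero_add, pow_one, Nat.cast_zero, div_one] at h
  calc |log (1 - x) + x| = |x + log (1 - x)| := by rw [add_comm]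
    _ ≤ |x| ^ 2 / (1 - |x|) := h
    _ ≤ 2 * x ^ 2 := by
      rw [div_le_iff₀ (by linarith), sq_abs]
      nlinarith [sq_nonneg x]

lemma tendsto_nat_mul_log_one_sub_add {q : ℕ → ℝ} (hq : Tendsto q atTop (𝓝 0))
    (hq2 : Tendsto (fun n : ℕ => n * q n ^ 2) atTop (𝓝 0)) :
    Tendsto (fun n : ℕ => n * (log (1 - q n) + q n)) atTop (𝓝 0) := by
  have hsmall : ∀ᶠ n in atTop, |q n| ≤ 1 / 2 := by
    simpa using hq.abs.eventually (eventually_le_nhds (by norm_num : |(0 : ℝ)| < 1 / 2))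
  refine squeeze_zero_norm' ?_ (by simpa using hq2.const_mul 2)
  filter_upwards [hsmall] with n hn
  rw [norm_mul, Real.norm_natCast, Real.norm_eq_abs]
  nlinarith [abs_log_one_sub_add_le hn, (Nat.cast_nonneg n : (0 : ℝ) ≤ n)]

lemma binomAtMostOne_mul_pow_eq {m k : ℕ} (hm : 0 < m) (p : ℝ) :
    binomAtMostOne m p * (1 - p) ^ (2 * k + 1) = (1 - p) ^ (m + 2 * k) * (1 - p + m * p) := by
  obtain ⟨m, rfl⟩ := Nat.exists_eq_add_of_lt hm
  simp only [binomAtMostOne, zero_add, Nat.add_sub_cancel]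
  rw [show m + 1 + 2 * k = m + (2 * k + 1) by ring]
  push_cast
  ring

lemma nat_mul_binomAtMostOne_mul_pow_eq {n k : ℕ} {p c : ℝ} (hkn : k < n) (hlog : 0 < log n)
    (hp : p < 1) (hL : 2 * n * p = log n + log (log n) + c) :
    n * binomAtMostOne (2 * (n - k)) p * (1 - p) ^ (2 * k + 1) =
      exp (-c) * exp (2 * (n * (log (1 - p) + p))) *
        ((1 - p - 2 * k * p + (log n + log (log n) + c)) / log n) := by
  have hn : (0 : ℝ) < n := by exact_mod_cast Nat.zero_lt_of_lt hkn
  have hpow : (1 - p) ^ (2 * n) = exp (2 * (n * (log (1 - p) + p))) * exp (-(2 * n * p)) := by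
    rw [← exp_add, show 2 * (n * (log (1 - p) + p)) + -(2 * n * p) =
      ((2 * n : ℕ) : ℝ) * log (1 - p) by push_cast; ring, exp_nat_mul, exp_log (by linarith)]
  have hexp : n * exp (-(log n + log (log n) + c)) = exp (-c) / log n := by
    simp only [neg_add, exp_add, exp_neg, exp_log hn, exp_log hlog]
    field_simp
  rw [mul_assoc, binomAtMostOne_mul_pow_eq (by omega), show 2 * (n - k) + 2 * k = 2 * n by omega,
    hpow, ← hL]
  rw [← hL] at hexp
  push_cast [Nat.cast_sub hkn.le]
  calc _ = exp (2 * (n * (log (1 - p) + p))) * (n * exp (-(2 * n * p))) *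
        (1 - p + 2 * (n - k) * p) := by ring
    _ = _ := by rw [hexp]; ring

lemma tendsto_nat_mul_binomAtMostOne (c : ℝ) (k : ℕ) :
    Tendsto (fun n : ℕ => n * binomAtMostOne (2 * (n - k)) (criticalProb c n)) atTop
      (𝓝 (exp (-c))) := by
  have hp := tendsto_criticalProb c
  have hq : Tendsto (fun n => (1 - criticalProb c n) ^ (2 * k + 1)) atTop (𝓝 1) := by
    simpa using ((tendsto_const_nhds (x := (1 : ℝ))).sub hp).pow (2 * k + 1)
  have hexp : Tendsto
      (fun n : ℕ => exp (2 * (n * (log (1 - criticalProb c n) + criticalProb c n)))) atTop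
      (𝓝 1) := by
    simpa using ((tendsto_nat_mul_log_one_sub_add hp (tendsto_nat_mul_criticalProb_sq c)).const_mul
      2).rexp
  have hratio : Tendsto (fun n : ℕ => (1 - criticalProb c n - 2 * k * criticalProb c n +
      (log n + log (log n) + c)) / log n) atTop (𝓝 1) := by
    simp only [add_div (1 - criticalProb c _ - 2 * _ * criticalProb c _)]
    simpa using ((((tendsto_const_nhds (x := (1 : ℝ))).sub hp).sub
      (hp.const_mul (2 * k : ℝ))).div_atTop tendsto_log_natCast).add
        (tendsto_log_add_log_log_add_div_log c)
  have hmain : Tendsto (fun n : ℕ => n * binomAtMostOne (2 * (n - k)) (criticalProb c n) *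
      (1 - criticalProb c n) ^ (2 * k + 1)) atTop (𝓝 (exp (-c))) := by
    refine (by simpa using (tendsto_const_nhds (x := exp (-c))).mul hexp |>.mul hratio :
      Tendsto _ atTop (𝓝 (exp (-c)))).congr' ?_
    filter_upwards [eventually_gt_atTop k, eventually_one_lt_log_natCast,
      eventually_criticalProb_mem_Icc c] with n hkn hlog hpn
    have hn : (n : ℝ) ≠ 0 := by exact_mod_cast (Nat.zero_lt_of_lt hkn).ne'
    refine (nat_mul_binomAtMostOne_mul_pow_eq hkn (by linarith) (by linarith) ?_).symm
    rw [criticalProb]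
    field_simp
  refine (by simpa using hmain.div hq one_ne_zero : Tendsto _ atTop (𝓝 (exp (-c)))).congr' ?_
  filter_upwards [eventually_criticalProb_mem_Icc c] with n hpn
  exact mul_div_cancel_right₀ _ (pow_ne_zero _ (by linarith))

end asymptotics

lemma tendsto_lowDegMoment (c : ℝ) (k : ℕ) :
    Tendsto (fun n => lowDegMoment n (criticalProb c n) k) atTop
      (𝓝 (Real.exp (-c) ^ k / k.factorial)) := by
  have hupper := ProbabilityTheory.tendsto_choose_mul_pow_atTop k
    (tendsto_nat_mul_binomAtMostOne c k)
  have hinner : Tendsto (fun n => (1 - criticalProb c n) ^ (k * k)) atTop (𝓝 1) := by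
    simpa using ((tendsto_const_nhds (x := (1 : ℝ))).sub (tendsto_criticalProb c)).pow (k * k)
  have hlower : Tendsto (fun n => (n.choose k : ℝ) * ((1 - criticalProb c n) ^ (k * k) *
      binomAtMostOne (2 * (n - k)) (criticalProb c n) ^ k)) atTop
      (𝓝 (Real.exp (-c) ^ k / k.factorial)) := by
    simpa [mul_left_comm] using hinner.mul hupper
  refine tendsto_of_tendsto_of_tendsto_of_le_of_le' hlower hupper ?_ ?_
  all_goals filter_upwards [eventually_criticalProb_mem_Icc c] with n hp
  · exact le_lowDegMoment hp.1 (by linarith) k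
  · exact lowDegMoment_le hp.1 (by linarith) k

/-- for `p = (log n + log log n + c)/(2n)`, the probability that every vertex
of `D_{n,p}` has total degree at least `2` tends to `exp (-exp (-c))` as `n → ∞`. -/
theorem stmt_7 (c : ℝ) :
    Tendsto
      (fun n : ℕ =>
        probDnp n ((Real.log n + Real.log (Real.log n) + c) / (2 * n))
          (fun D => ∀ v : Fin n, 2 ≤ inDeg n D v + outDeg n D v))
      atTop (𝓝 (Real.exp (-Real.exp (-c)))) := by
  simp only [probDnp_minDeg_two_eq]
  refine tendsto_exp_neg_of_bonferroni (tendsto_lowDegMoment c) (fun j => ?_) fun j => ?_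
  all_goals filter_upwards [eventually_criticalProb_mem_Icc c] with n hp
  · exact expect_lowDegVerts_eq_empty_le hp.1 (by linarith) j
  · exact le_expect_lowDegVerts_eq_empty hp.1 (by linarith) j

end
end

section
/- Fix k ≥ 3 and let D be any digraph with D_{n,p_−} ⊆ D ⊆ D_{n,p_+} satisfying properties H1, H2 and H3. Let 𝒫_0 be any collection of pairwise vertex-disjoint paths in D, each of length at most 6k+2 and each containing exactly one non-good vertex. Then: (H4) for every dangerous vertex v, every neighbour of v in D is good and is not contained in any path of 𝒫_0; and (H5) for every vertex v, all but at most 4k of the neighbours of v in D are good and are not contained in any path of 𝒫_0. -/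
open Classical Filter Topology MeasureTheory

noncomputable section

/-- Sample space for the coupled random digraph process: one independent uniform-`[0,1]`
variable for each potential arc `(u, w)` and each label (`false` = "in", `true` = "out").
The arc `u → w` is present in `D^in_{n,p'}` iff `ω (u, w, false) ≤ p'`, and in
`D^out_{n,p'}` iff `ω (u, w, true) ≤ p'`. -/
abbrev OmegaT (n : ℕ) := Fin n × Fin n × Bool → ℝ

/-- The product of uniform measures on `[0,1]`: the distribution of the i.i.d. family
`(X^in_{v,w}, X^out_{v,w})`. -/
def muT (n : ℕ) : Measure (OmegaT n) :=
  Measure.pi fun _ => volume.restrict (Set.Icc (0 : ℝ) 1)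

/-- If `2p' - p'^2 = p` then `p' = pp p`: the parameter of the two independent copies
`D^in`, `D^out` whose union is `D_{n,p}`. -/
def pp (p : ℝ) : ℝ := 1 - Real.sqrt (1 - p)

/-- The labelled arc `u → w` with label `b` (`false` = "in", `true` = "out") is present at
time `p` (that is, in `D^in_{n,p'}` if `b = false`, and in `D^out_{n,p'}` if `b = true`,
where `2p' - p'^2 = p`). -/
def arcPres (n : ℕ) (ω : OmegaT n) (p : ℝ) (u w : Fin n) (b : Bool) : Prop :=
  u ≠ w ∧ ω (u, w, b) ≤ pp p

/-- The digraph `D_{n,p} = D^in_{n,p'} ∪ D^out_{n,p'}` at time `p` (labels forgotten,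
parallel pairs merged). -/
def Dat (n : ℕ) (ω : OmegaT n) (p : ℝ) (u w : Fin n) : Prop :=
  arcPres n ω p u w false ∨ arcPres n ω p u w true

/-- A vertex `v` is good (w.r.t. the bin partition `bin` and the reference time `pm`) if for
every bin `j` it has at least `4k+2` visible out-arcs (out-arcs with tail `v`) with head in
bin `j`, and at least `4k+2` visible in-arcs (in-arcs with head `v`) with tail in bin `j`,
at time `pm`. -/
def GoodV (n k : ℕ) (bin : Fin n → Fin k) (ω : OmegaT n) (pm : ℝ) (v : Fin n) : Prop :=
  ∀ j : Fin k,
    4 * k + 2 ≤ {w : Fin n | bin w = j ∧ arcPres n ω pm v w true}.ncard ∧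
    4 * k + 2 ≤ {w : Fin n | bin w = j ∧ arcPres n ω pm w v false}.ncard

/-- The total degree (in-degree plus out-degree) of `v` at time `pm`, all arcs (visible and
invisible, any label) counted. -/
def totDeg (n : ℕ) (ω : OmegaT n) (pm : ℝ) (v : Fin n) : ℕ :=
  {w : Fin n | Dat n ω pm v w}.ncard + {w : Fin n | Dat n ω pm w v}.ncard

/-- A vertex is dangerous if it is not good and its total degree at the reference time is at
most `4k+2`. -/
def DangerousV (n k : ℕ) (bin : Fin n → Fin k) (ω : OmegaT n) (pm : ℝ) (v : Fin n) : Prop :=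
  ¬ GoodV n k bin ω pm v ∧ totDeg n ω pm v ≤ 4 * k + 2

/-- Adjacency in the underlying undirected graph of the digraph `D`. -/
def UAdj (n : ℕ) (D : Fin n → Fin n → Prop) (x y : Fin n) : Prop := D x y ∨ D y x

/-- `y` is within `D`-distance `d` of `x`: there is a walk of length at most `d` from `x`
to `y` in the underlying undirected graph of `D`. -/
def WithinDist (n : ℕ) (D : Fin n → Fin n → Prop) (d : ℕ) (x y : Fin n) : Prop :=
  ∃ l : List (Fin n), l.length ≤ d ∧ List.Chain (UAdj n D) x l ∧
    (x :: l).getLast (List.cons_ne_nil x l) = y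

/-- Property H1 for the digraph `D`: every vertex has fewer than `4k` non-good vertices
within `D`-distance `10k`. -/
def PropH1 (n k : ℕ) (D : Fin n → Fin n → Prop) (Good : Fin n → Prop) : Prop :=
  ∀ v : Fin n, {w : Fin n | WithinDist n D (10 * k) v w ∧ ¬ Good w}.ncard < 4 * k

/-- Property H2 for the digraph `D`: every dangerous vertex has only good vertices within
`D`-distance `10k`. -/
def PropH2 (n k : ℕ) (D : Fin n → Fin n → Prop) (Good Dang : Fin n → Prop) : Prop :=
  ∀ v : Fin n, Dang v → ∀ w : Fin n, WithinDist n D (10 * k) v w → Good w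

/-- A cycle of length `l` in the digraph `D`, with any orientation of its edges: `l` distinct
vertices with consecutive ones adjacent in the underlying graph; a cycle of length `2`
consists of a pair of arcs in opposite directions. -/
def IsCycleRel (n l : ℕ) (D : Fin n → Fin n → Prop) (c : ZMod l → Fin n) : Prop :=
  Function.Injective c ∧
  (∀ i : ZMod l, D (c i) (c (i + 1)) ∨ D (c (i + 1)) (c i)) ∧
  (l = 2 → D (c 0) (c 1) ∧ D (c 1) (c 0))

/-- Property H3 for the digraph `D`: every cycle of length at most `10k` (with any
orientation, including cycles of length 2) has only good vertices within `D`-distance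
`10k`. -/
def PropH3Rel (n k : ℕ) (D : Fin n → Fin n → Prop) (Good : Fin n → Prop) : Prop :=
  ∀ l : ℕ, 2 ≤ l → l ≤ 10 * k →
    ∀ c : ZMod l → Fin n, IsCycleRel n l D c →
      ∀ i : ZMod l, ∀ w : Fin n, WithinDist n D (10 * k) (c i) w → Good w

/-!
Any two vertices of a path of `P0` are within distance `6k + 2`, so the non-good vertex of a
path through a neighbour of `v` is within distance `6k + 3 ≤ 10k` of `v`; H2 then gives H4.

For H5, contract every path of `P0` to its non-good vertex. This sends the bad neighbours of `v`
into the fewer than `4k` non-good vertices near `v` (H1). Two neighbours of `v` on a common path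
not containing `v` would close with `v` a cycle of length at most `6k + 4 ≤ 10k` near a
non-good vertex, contradicting H3. Hence the contraction is injective away from the path `Pv`
through `v` and misses the non-good vertex of `Pv` there, while, by the same argument applied
to both sides of `v` on `Pv`, at most two neighbours of `v` lie on `Pv`.
-/

section Walks

variable {n : ℕ} {D : Fin n → Fin n → Prop} {d e : ℕ} {x y z : Fin n}

theorem UAdj.symm (h : UAdj n D x y) : UAdj n D y x := Or.symm h

theorem WithinDist.refl (d : ℕ) (x : Fin n) : WithinDist n D d x x :=
  ⟨[], Nat.zero_le d, List.IsChain.singleton x, rfl⟩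

theorem WithinDist.mono (h : WithinDist n D d x y) (hde : d ≤ e) : WithinDist n D e x y :=
  let ⟨l, hl, hch, hy⟩ := h
  ⟨l, hl.trans hde, hch, hy⟩

theorem WithinDist.cons (hxy : UAdj n D x y) (h : WithinDist n D d y z) :
    WithinDist n D (d + 1) x z := by
  obtain ⟨l, hl, hch, rfl⟩ := h
  exact ⟨y :: l, by simpa using hl, hch.cons_cons hxy, by simp⟩

theorem withinDist_one_of_uAdj (h : UAdj n D x y) : WithinDist n D 1 x y :=
  (WithinDist.refl 0 y).cons h

theorem WithinDist.trans (h₁ : WithinDist n D d x y) (h₂ : WithinDist n D e y z) :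
    WithinDist n D (d + e) x z := by
  obtain ⟨l, hl, hch, rfl⟩ := h₁
  induction l generalizing x d with
  | nil => simpa using h₂.mono (Nat.le_add_left e d)
  | cons b l ih =>
    obtain ⟨hxb, hch⟩ := List.isChain_cons_cons.mp hch
    have hl : l.length + 1 ≤ d := hl
    exact ((ih (Nat.le_sub_one_of_lt hl) hch (by simpa using h₂)).cons hxb).mono (by omega)

theorem WithinDist.symm (h : WithinDist n D d x y) : WithinDist n D d y x := by
  obtain ⟨l, hl, hch, rfl⟩ := h
  induction l generalizing x d with
  | nil => exact WithinDist.refl d x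
  | cons b l ih =>
    obtain ⟨hxb, hch⟩ := List.isChain_cons_cons.mp hch
    have := (ih le_rfl hch).trans (withinDist_one_of_uAdj hxb.symm)
    simpa using this.mono (by simpa using hl)

theorem withinDist_of_mem_of_isChain_cons {l : List (Fin n)} (hch : (x :: l).IsChain (UAdj n D))
    (hy : y ∈ x :: l) : WithinDist n D l.length x y := by
  rcases List.mem_cons.mp hy with rfl | hy
  · exact WithinDist.refl _ _
  obtain ⟨s, t, rfl⟩ := List.append_of_mem hy
  refine ⟨s ++ [y], by simp, hch.prefix ?_, by simp⟩
  exact ⟨t, by simp⟩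

theorem withinDist_of_mem_of_isChain {P : List (Fin n)} (hch : P.IsChain (UAdj n D))
    (hx : x ∈ P) (hy : y ∈ P) : WithinDist n D (P.length - 1) x y := by
  obtain ⟨s, t, rfl⟩ := List.append_of_mem hx
  rcases List.mem_append.mp hy with hy | hy
  · obtain ⟨s₁, s₂, rfl⟩ := List.append_of_mem hy
    have hch' : (y :: (s₂ ++ x :: t)).IsChain (UAdj n D) := hch.infix ⟨s₁, [], by simp⟩
    exact (withinDist_of_mem_of_isChain_cons hch' (by simp)).symm.mono (by simp)
  · have hch' : (x :: t).IsChain (UAdj n D) := hch.infix ⟨s, [], by simp⟩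
    exact (withinDist_of_mem_of_isChain_cons hch' hy).mono (by simp)

end Walks

section Cycles

variable {n k : ℕ} {D : Fin n → Fin n → Prop} {Good : Fin n → Prop}

theorem isCycleRel_getD {C : List (Fin n)} (hlen : 3 ≤ C.length) (hnd : C.Nodup)
    (hch : C.IsChain (UAdj n D)) (hclose : ∀ b ∈ C.getLast?, ∀ a ∈ C.head?, UAdj n D b a)
    (x₀ : Fin n) : IsCycleRel n C.length D (fun i => C.getD i.val x₀) := by
  have : NeZero C.length := ⟨by omega⟩
  have hval (i : ZMod C.length) : C.getD i.val x₀ = C[i.val]'(ZMod.val_lt i) :=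
    List.getD_eq_getElem _ _ _
  refine ⟨fun i j hij => ?_, fun i => ?_, fun h => absurd h (by omega)⟩
  · simp only [hval] at hij
    exact ZMod.val_injective _ ((hnd.getElem_inj_iff).mp hij)
  · have hi := ZMod.val_lt i
    have hsucc : (i + 1).val = (i.val + 1) % C.length := by
      rw [ZMod.val_add, ZMod.val_one_eq_one_mod, Nat.add_mod_mod]
    simp only [hval]
    by_cases hlt : i.val + 1 < C.length
    · have e : (i + 1).val = i.val + 1 := by rw [hsucc, Nat.mod_eq_of_lt hlt]
      simp only [e]
      exact List.isChain_iff_getElem.mp hch i.val hlt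
    · have heq : i.val + 1 = C.length := by omega
      have e : (i + 1).val = 0 := by rw [hsucc, heq, Nat.mod_self]
      simp only [e]
      refine hclose _ ?_ _ ?_
      · simp [List.getLast?_eq_getElem?, ← heq]
      · simp [List.head?_eq_getElem?]

theorem PropH3Rel.good_of_cycle (h3 : PropH3Rel n k D Good) {C : List (Fin n)}
    (hlen : 3 ≤ C.length) (hlen' : C.length ≤ 10 * k) (hnd : C.Nodup)
    (hch : C.IsChain (UAdj n D)) (hclose : ∀ b ∈ C.getLast?, ∀ a ∈ C.head?, UAdj n D b a)
    {x w : Fin n} (hx : x ∈ C) (hw : WithinDist n D (10 * k) x w) : Good w := by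
  have : NeZero C.length := ⟨by omega⟩
  obtain ⟨i, hi, rfl⟩ := List.mem_iff_getElem.mp hx
  refine h3 C.length (by omega) hlen' _ (isCycleRel_getD hlen hnd hch hclose C[i])
    (i : ZMod C.length) w ?_
  rwa [ZMod.val_cast_of_lt hi, List.getD_eq_getElem _ _ hi]

end Cycles

section Neighbours

variable {n k : ℕ} {D : Fin n → Fin n → Prop} {Good : Fin n → Prop} {u v : Fin n}

theorem subsingleton_uAdj_mem_of_not_mem (h3 : PropH3Rel n k D Good) (hu : ¬ Good u)
    {L : List (Fin n)} (hnd : L.Nodup) (hch : L.IsChain (UAdj n D)) (hlen : L.length < 10 * k)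
    (hnear : ∀ x ∈ L, WithinDist n D (10 * k) x u) (hv : v ∉ L) :
    {w | w ∈ L ∧ UAdj n D v w}.Subsingleton := by
  induction L with
  | nil => simp
  | cons a L ih =>
    have hfar : UAdj n D v a → ∀ w ∈ L, ¬ UAdj n D v w := by
      intro hva w hw hvw
      obtain ⟨s, t, rfl⟩ := List.append_of_mem hw
      have hpre : a :: (s ++ [w]) <+: a :: (s ++ w :: t) := ⟨t, by simp⟩
      refine hu (h3.good_of_cycle (C := v :: a :: (s ++ [w])) ?_ ?_ ?_ ?_ ?_
        (List.mem_cons_of_mem v List.mem_cons_self) (hnear a List.mem_cons_self))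
      · simp
      · simp only [List.length_cons, List.length_append, List.length_nil] at hlen ⊢
        omega
      · exact List.nodup_cons.mpr ⟨fun h => hv (hpre.subset h), hnd.sublist hpre.sublist⟩
      · exact (hch.prefix hpre).cons_cons hva
      · intro b hb c hc
        obtain rfl : w = b := by simpa [List.getLast?_cons] using hb
        obtain rfl : v = c := by simpa using hc
        exact hvw.symm
    rintro w₁ ⟨hw₁, h₁⟩ w₂ ⟨hw₂, h₂⟩
    rcases List.mem_cons.mp hw₁ with rfl | hw₁L <;> rcases List.mem_cons.mp hw₂ with rfl | hw₂L
    · rfl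
    · exact absurd h₂ (hfar h₁ _ hw₂L)
    · exact absurd h₁ (hfar h₂ _ hw₁L)
    · exact ih hnd.of_cons hch.tail (Nat.lt_of_succ_lt hlen)
        (fun x hx => hnear x (List.mem_cons_of_mem a hx)) (fun h => hv (List.mem_cons_of_mem a h))
        ⟨hw₁L, h₁⟩ ⟨hw₂L, h₂⟩

theorem ncard_uAdj_mem_le_two (h3 : PropH3Rel n k D Good) (hloop : ∀ x, ¬ D x x)
    (hu : ¬ Good u) {P : List (Fin n)} (hnd : P.Nodup) (hch : P.IsChain (UAdj n D))
    (hlen : P.length < 10 * k) (hnear : ∀ x ∈ P, WithinDist n D (10 * k) x u) (hv : v ∈ P) :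
    {w | w ∈ P ∧ UAdj n D v w}.ncard ≤ 2 := by
  obtain ⟨s, t, rfl⟩ := List.append_of_mem hv
  have hv' : v ∉ s ++ t := (List.nodup_cons.mp (List.nodup_middle.mp hnd)).1
  have hside : ∀ L, L <:+: s ++ v :: t → v ∉ L → {w | w ∈ L ∧ UAdj n D v w}.ncard ≤ 1 :=
    fun L hL hvL => Set.ncard_le_one_iff_subsingleton.mpr <|
      subsingleton_uAdj_mem_of_not_mem h3 hu (hnd.sublist hL.sublist) (hch.infix hL)
        (lt_of_le_of_lt hL.length_le hlen) (fun x hx => hnear x (hL.subset hx)) hvL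
  have hsplit : {w | w ∈ s ++ v :: t ∧ UAdj n D v w} ⊆
      {w | w ∈ s ∧ UAdj n D v w} ∪ {w | w ∈ t ∧ UAdj n D v w} := by
    rintro w ⟨hw, hvw⟩
    rcases List.mem_append.mp hw with hw | hw
    · exact Or.inl ⟨hw, hvw⟩
    rcases List.mem_cons.mp hw with rfl | hw
    · exact absurd hvw (by rintro (h | h) <;> exact hloop w h)
    · exact Or.inr ⟨hw, hvw⟩
  calc _ ≤ _ := Set.ncard_le_ncard hsplit
    _ ≤ _ := Set.ncard_union_le _ _
    _ ≤ 1 + 1 := add_le_add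
        (hside s ⟨[], v :: t, by simp⟩ (fun h => hv' (List.mem_append_left t h)))
        (hside t ⟨s ++ [v], [], by simp⟩ (fun h => hv' (List.mem_append_right s h)))

end Neighbours

section PathSystem

variable {n : ℕ} {P0 : Set (List (Fin n))} {root : List (Fin n) → Fin n} {P Q : List (Fin n)}
  {w w₁ w₂ : Fin n}

def collapsePaths (P0 : Set (List (Fin n))) (root : List (Fin n) → Fin n) (w : Fin n) : Fin n :=
  if h : ∃ P ∈ P0, w ∈ P then root h.choose else w

theorem eq_of_mem_of_mem (hdisj : ∀ P ∈ P0, ∀ Q ∈ P0, P ≠ Q → ∀ v : Fin n, v ∈ P → v ∉ Q)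
    (hP : P ∈ P0) (hQ : Q ∈ P0) (hwP : w ∈ P) (hwQ : w ∈ Q) : P = Q :=
  by_contra fun hPQ => hdisj P hP Q hQ hPQ w hwP hwQ

theorem collapsePaths_of_mem (hdisj : ∀ P ∈ P0, ∀ Q ∈ P0, P ≠ Q → ∀ v : Fin n, v ∈ P → v ∉ Q)
    (hP : P ∈ P0) (hw : w ∈ P) : collapsePaths P0 root w = root P := by
  have h : ∃ P ∈ P0, w ∈ P := ⟨P, hP, hw⟩
  rw [collapsePaths, dif_pos h, eq_of_mem_of_mem hdisj h.choose_spec.1 hP h.choose_spec.2 hw]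

theorem collapsePaths_of_forall_not_mem (hw : ∀ P ∈ P0, w ∉ P) : collapsePaths P0 root w = w :=
  dif_neg fun ⟨P, hP, hwP⟩ => hw P hP hwP

theorem mem_of_collapsePaths_eq_root
    (hdisj : ∀ P ∈ P0, ∀ Q ∈ P0, P ≠ Q → ∀ v : Fin n, v ∈ P → v ∉ Q)
    (hroot : ∀ P ∈ P0, root P ∈ P) (hQ : Q ∈ P0) (h : collapsePaths P0 root w = root Q) :
    w ∈ Q := by
  by_cases hw : ∃ P ∈ P0, w ∈ P
  · obtain ⟨P, hP, hwP⟩ := hw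
    rw [collapsePaths_of_mem hdisj hP hwP] at h
    rwa [← eq_of_mem_of_mem hdisj hP hQ (hroot P hP) (h ▸ hroot Q hQ)]
  · push Not at hw
    rw [collapsePaths_of_forall_not_mem hw] at h
    exact h ▸ hroot Q hQ

theorem exists_mem_mem_of_collapsePaths_eq
    (hdisj : ∀ P ∈ P0, ∀ Q ∈ P0, P ≠ Q → ∀ v : Fin n, v ∈ P → v ∉ Q)
    (hroot : ∀ P ∈ P0, root P ∈ P) (h : collapsePaths P0 root w₁ = collapsePaths P0 root w₂)
    (hne : w₁ ≠ w₂) : ∃ P ∈ P0, w₁ ∈ P ∧ w₂ ∈ P := by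
  by_cases hw₁ : ∃ P ∈ P0, w₁ ∈ P
  · obtain ⟨P, hP, hw₁P⟩ := hw₁
    rw [collapsePaths_of_mem hdisj hP hw₁P] at h
    exact ⟨P, hP, hw₁P, mem_of_collapsePaths_eq_root hdisj hroot hP h.symm⟩
  by_cases hw₂ : ∃ P ∈ P0, w₂ ∈ P
  · obtain ⟨P, hP, hw₂P⟩ := hw₂
    rw [collapsePaths_of_mem hdisj hP hw₂P] at h
    exact ⟨P, hP, mem_of_collapsePaths_eq_root hdisj hroot hP h, hw₂P⟩
  push Not at hw₁ hw₂
  rw [collapsePaths_of_forall_not_mem hw₁, collapsePaths_of_forall_not_mem hw₂] at h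
  exact absurd h hne

end PathSystem

structure IsRootedPathFamily (n k : ℕ) (D : Fin n → Fin n → Prop) (Good : Fin n → Prop)
    (P0 : Set (List (Fin n))) (root : List (Fin n) → Fin n) : Prop where
  nodup : ∀ P ∈ P0, P.Nodup
  isChain : ∀ P ∈ P0, P.IsChain (UAdj n D)
  length_le : ∀ P ∈ P0, P.length ≤ 6 * k + 3
  root_mem : ∀ P ∈ P0, root P ∈ P
  not_good_root : ∀ P ∈ P0, ¬ Good (root P)
  disjoint : ∀ P ∈ P0, ∀ Q ∈ P0, P ≠ Q → ∀ v : Fin n, v ∈ P → v ∉ Q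

namespace IsRootedPathFamily

variable {n k : ℕ} {D : Fin n → Fin n → Prop} {Good : Fin n → Prop}
  {P0 : Set (List (Fin n))} {root : List (Fin n) → Fin n} {P : List (Fin n)} {v w : Fin n}

theorem withinDist_root (hF : IsRootedPathFamily n k D Good P0 root) (hP : P ∈ P0)
    (hw : w ∈ P) : WithinDist n D (6 * k + 2) w (root P) :=
  (withinDist_of_mem_of_isChain (hF.isChain P hP) hw (hF.root_mem P hP)).mono
    (by have := hF.length_le P hP; omega)

theorem withinDist_collapsePaths_and_not_good (hF : IsRootedPathFamily n k D Good P0 root)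
    (hk : 1 ≤ k)
    (hvw : UAdj n D v w) (hbad : ¬ (Good w ∧ ∀ P ∈ P0, w ∉ P)) :
    WithinDist n D (10 * k) v (collapsePaths P0 root w) ∧ ¬ Good (collapsePaths P0 root w) := by
  by_cases hw : ∃ P ∈ P0, w ∈ P
  · obtain ⟨P, hP, hwP⟩ := hw
    rw [collapsePaths_of_mem hF.disjoint hP hwP]
    exact ⟨((hF.withinDist_root hP hwP).cons hvw).mono (by omega), hF.not_good_root P hP⟩
  · push Not at hw
    rw [collapsePaths_of_forall_not_mem hw]
    exact ⟨(withinDist_one_of_uAdj hvw).mono (by omega), fun hg => hbad ⟨hg, hw⟩⟩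

theorem injOn_collapsePaths (hF : IsRootedPathFamily n k D Good P0 root) (hk : 1 ≤ k)
    (h3 : PropH3Rel n k D Good) (v : Fin n) :
    Set.InjOn (collapsePaths P0 root) {w | UAdj n D v w ∧ ∀ P ∈ P0, w ∈ P → v ∉ P} := by
  rintro w₁ ⟨hvw₁, hw₁⟩ w₂ ⟨hvw₂, -⟩ h
  by_contra hne
  obtain ⟨P, hP, hw₁P, hw₂P⟩ := exists_mem_mem_of_collapsePaths_eq hF.disjoint hF.root_mem h hne
  refine hne <| subsingleton_uAdj_mem_of_not_mem h3 (hF.not_good_root P hP) (hF.nodup P hP)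
    (hF.isChain P hP) (by have := hF.length_le P hP; omega)
    (fun x hx => (hF.withinDist_root hP hx).mono (by omega)) (hw₁ P hP hw₁P)
    ⟨hw₁P, hvw₁⟩ ⟨hw₂P, hvw₂⟩

theorem ncard_uAdj_not_good_or_mem_le (hF : IsRootedPathFamily n k D Good P0 root)
    (hk : 1 ≤ k) (hloop : ∀ x, ¬ D x x) (h1 : PropH1 n k D Good) (h3 : PropH3Rel n k D Good)
    (v : Fin n) : {w | UAdj n D v w ∧ ¬ (Good w ∧ ∀ P ∈ P0, w ∉ P)}.ncard ≤ 4 * k := by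
  set B := {w | UAdj n D v w ∧ ¬ (Good w ∧ ∀ P ∈ P0, w ∉ P)}
  set S := {w | WithinDist n D (10 * k) v w ∧ ¬ Good w}
  have hS : S.ncard < 4 * k := h1 v
  have hmaps : ∀ w ∈ B, collapsePaths P0 root w ∈ S := fun w hw =>
    hF.withinDist_collapsePaths_and_not_good hk hw.1 hw.2
  by_cases hv : ∃ P ∈ P0, v ∈ P
  · obtain ⟨Pv, hPv, hvPv⟩ := hv
    have hrootS : root Pv ∈ S :=
      ⟨(hF.withinDist_root hPv hvPv).mono (by omega), hF.not_good_root Pv hPv⟩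
    have hon : (B ∩ {w | w ∈ Pv}).ncard ≤ 2 :=
      (Set.ncard_le_ncard fun w hw => Set.mem_ofPred.mpr ⟨hw.2, hw.1.1⟩).trans <|
        ncard_uAdj_mem_le_two h3 hloop (hF.not_good_root Pv hPv) (hF.nodup Pv hPv)
          (hF.isChain Pv hPv) (by have := hF.length_le Pv hPv; omega)
          (fun x hx => (hF.withinDist_root hPv hx).mono (by omega)) hvPv
    have hoff : (B \ {w | w ∈ Pv}).ncard ≤ (S \ {root Pv}).ncard := by
      refine Set.ncard_le_ncard_of_injOn (collapsePaths P0 root) (fun w hw => ?_)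
        ((hF.injOn_collapsePaths hk h3 v).mono ?_)
      · refine Set.mem_sdiff_singleton.mpr ⟨hmaps w hw.1, fun h => hw.2 ?_⟩
        exact mem_of_collapsePaths_eq_root hF.disjoint hF.root_mem hPv h
      · rintro w ⟨hwB, hwPv⟩
        refine ⟨hwB.1, fun P hP hwP hvP => hwPv ?_⟩
        exact eq_of_mem_of_mem hF.disjoint hP hPv hvP hvPv ▸ hwP
    rw [← Set.ncard_inter_add_ncard_sdiff_eq_ncard B {w | w ∈ Pv}]
    have := Set.ncard_sdiff_singleton_of_mem hrootS
    omega
  · push Not at hv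
    refine (Set.ncard_le_ncard_of_injOn (collapsePaths P0 root) hmaps
      ((hF.injOn_collapsePaths hk h3 v).mono fun w hw => ?_)).trans hS.le
    exact ⟨hw.1, fun P hP _ => hv P hP⟩

end IsRootedPathFamily

theorem stmt_12_general (n k : ℕ) (hk : 3 ≤ k) (bin : Fin n → Fin k) (ω : OmegaT n)
    (pminus pplus : ℝ)
    (D : Fin n → Fin n → Prop)
    (hhigh : ∀ u w : Fin n, D u w → Dat n ω pplus u w)
    (h1 : PropH1 n k D (GoodV n k bin ω pminus))
    (h2 : PropH2 n k D (GoodV n k bin ω pminus) (DangerousV n k bin ω pminus))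
    (h3 : PropH3Rel n k D (GoodV n k bin ω pminus))
    (P0 : Set (List (Fin n)))
    (hpaths : ∀ P ∈ P0, P ≠ [] ∧ P.Nodup ∧ P.Chain' (UAdj n D) ∧ P.length ≤ 6 * k + 3 ∧
      (∃! v : Fin n, v ∈ P ∧ ¬ GoodV n k bin ω pminus v))
    (hdisj : ∀ P ∈ P0, ∀ Q ∈ P0, P ≠ Q → ∀ v : Fin n, v ∈ P → v ∉ Q) :
    (∀ v : Fin n, DangerousV n k bin ω pminus v →
      ∀ w : Fin n, UAdj n D v w →
        GoodV n k bin ω pminus w ∧ ∀ P ∈ P0, w ∉ P) ∧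
    (∀ v : Fin n,
      {w : Fin n | UAdj n D v w ∧
        ¬ (GoodV n k bin ω pminus w ∧ ∀ P ∈ P0, w ∉ P)}.ncard ≤ 4 * k) := by
  rcases isEmpty_or_nonempty (Fin n) with _ | _
  · exact ⟨fun v => isEmptyElim v, fun v => isEmptyElim v⟩
  choose! root hroot using fun P hP => (hpaths P hP).2.2.2.2.exists
  have hF : IsRootedPathFamily n k D (GoodV n k bin ω pminus) P0 root :=
    ⟨fun P hP => (hpaths P hP).2.1, fun P hP => (hpaths P hP).2.2.1,
      fun P hP => (hpaths P hP).2.2.2.1, fun P hP => (hroot P hP).1,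
      fun P hP => (hroot P hP).2, hdisj⟩
  have hloop : ∀ x, ¬ D x x := fun x hx => by
    rcases hhigh x x hx with h | h <;> exact h.1 rfl
  refine ⟨fun v hv w hvw => ⟨h2 v hv w ((withinDist_one_of_uAdj hvw).mono (by omega)),
    fun P hP hwP => hF.not_good_root P hP (h2 v hv _ ?_)⟩,
    hF.ncard_uAdj_not_good_or_mem_le (by omega) hloop h1 h3⟩
  exact ((hF.withinDist_root hP hwP).cons hvw).mono (by omega)

/-- Lemma on useful properties: fix `k ≥ 3`, a bin partition, a sample point
`ω` of the coupled process and reference times `pminus ≤ pplus`, with vertices classified as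
good/dangerous at time `pminus`. Let `D` be any digraph with `D_{n,pminus} ⊆ D ⊆ D_{n,pplus}`
satisfying H1, H2 and H3, and let `P₀` be a collection of pairwise vertex-disjoint paths
in `D`, each of length at most `6k+2` (i.e. with at most `6k+3` vertices) and each containing
exactly one non-good vertex. Then:
(H4) every neighbour of a dangerous vertex is good and lies in no path of `P₀`; and
(H5) for every vertex `v`, all but at most `4k` of the neighbours of `v` are good and lie in
no path of `P₀`. -/
theorem stmt_12 (n k : ℕ) (hk : 3 ≤ k) (bin : Fin n → Fin k) (ω : OmegaT n)
    (pminus pplus : ℝ) (hp : pminus ≤ pplus)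
    (D : Fin n → Fin n → Prop)
    (hlow : ∀ u w : Fin n, Dat n ω pminus u w → D u w)
    (hhigh : ∀ u w : Fin n, D u w → Dat n ω pplus u w)
    (h1 : PropH1 n k D (GoodV n k bin ω pminus))
    (h2 : PropH2 n k D (GoodV n k bin ω pminus) (DangerousV n k bin ω pminus))
    (h3 : PropH3Rel n k D (GoodV n k bin ω pminus))
    (P0 : Set (List (Fin n)))
    (hpaths : ∀ P ∈ P0, P ≠ [] ∧ P.Nodup ∧ P.Chain' (UAdj n D) ∧ P.length ≤ 6 * k + 3 ∧
      (∃! v : Fin n, v ∈ P ∧ ¬ GoodV n k bin ω pminus v))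
    (hdisj : ∀ P ∈ P0, ∀ Q ∈ P0, P ≠ Q → ∀ v : Fin n, v ∈ P → v ∉ Q) :
    (∀ v : Fin n, DangerousV n k bin ω pminus v →
      ∀ w : Fin n, UAdj n D v w →
        GoodV n k bin ω pminus w ∧ ∀ P ∈ P0, w ∉ P) ∧
    (∀ v : Fin n,
      {w : Fin n | UAdj n D v w ∧
        ¬ (GoodV n k bin ω pminus w ∧ ∀ P ∈ P0, w ∉ P)}.ncard ≤ 4 * k) :=
  stmt_12_general n k hk bin ω pminus pplus D hhigh h1 h2 h3 P0 hpaths hdisj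

end
end
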